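/- arXiv:1609.01431 — 2 statements merged into one kernel-verified Lean document; each statement's English description precedes it below -/
import Mathlib

section
/- Let k : ℝ → ℝ be a strictly concave continuous function with k(0) < 0 and k(λ)/λ → -∞ as λ → +∞, and let c* = inf_{λ>0} (-k(λ)/λ). Then: (1) for c = c*, the equation k(λ) + λc = 0 has exactly one solution λ > 0; (2) for every c > c*, the equation k(λ) + λc = 0 has exactly two solutions 0 < λ_c < Λ_c; (3) for c < c*, it has no positive solution. -/
/-!
Positive roots of `k λ + λ c = 0` are exactly the solutions of `g λ = c` with `g λ = -k λ / λ`.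
Since `k 0 < 0` and `k` is superlinearly decreasing, `g` blows up at both ends of `(0, ∞)`, so it
attains its infimum `c*` at some `λ₀`. For `c = c*` the strictly concave function
`k λ + λ c*` is `≤ 0` on `(0, ∞)` and vanishes at `λ₀`, so `λ₀` is its unique maximiser there.
For `c > c*` the function `k λ + λ c` is negative at `0`, positive at `λ₀` and negative far out,
so it has a root on each side of `λ₀`, and a strictly concave function has at most two roots.
-/

open Set Filter Topology

section StrictConcaveRoots

variable {f : ℝ → ℝ} {s : Set ℝ} {a b x : ℝ}

lemma StrictConcaveOn.pos_of_mem_Ioo (hf : StrictConcaveOn ℝ s f) (ha : a ∈ s) (hb : b ∈ s)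
    (hfa : f a = 0) (hfb : f b = 0) (hx : x ∈ Ioo a b) : 0 < f x := by
  have hab : a ≠ b := (hx.1.trans hx.2).ne
  have hx' : x ∈ openSegment ℝ a b := by rwa [openSegment_eq_Ioo (hx.1.trans hx.2)]
  simpa [hfa, hfb] using hf.lt_on_openSegment ha hb hab hx'

lemma StrictConcaveOn.eq_or_eq_of_eq_zero (hf : StrictConcaveOn ℝ s f) (ha : a ∈ s) (hb : b ∈ s)
    (hx : x ∈ s) (hab : a < b) (hfa : f a = 0) (hfb : f b = 0) (hfx : f x = 0) :
    x = a ∨ x = b := by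
  rcases lt_trichotomy x a with hxa | rfl | hax
  · exact absurd hfa (hf.pos_of_mem_Ioo hx hb hfx hfb ⟨hxa, hab⟩).ne'
  · exact .inl rfl
  rcases lt_trichotomy x b with hxb | rfl | hbx
  · exact absurd hfx (hf.pos_of_mem_Ioo ha hb hfa hfb ⟨hax, hxb⟩).ne'
  · exact .inr rfl
  · exact absurd hfb (hf.pos_of_mem_Ioo ha hx hfa hfx ⟨hab, hbx⟩).ne'

lemma StrictConcaveOn.exists_two_zeros (hf : StrictConcaveOn ℝ univ f) (hcont : Continuous f)
    {c d : ℝ} (hac : a ≤ c) (hcd : c ≤ d) (ha : f a < 0) (hc : 0 < f c) (hd : f d < 0) :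
    ∃ x₁ x₂, x₁ ∈ Ioo a c ∧ x₂ ∈ Ioo c d ∧ f x₁ = 0 ∧ f x₂ = 0 ∧
      ∀ x, f x = 0 → x = x₁ ∨ x = x₂ := by
  obtain ⟨x₁, hx₁, hfx₁⟩ := intermediate_value_Ioo hac hcont.continuousOn ⟨ha, hc⟩
  obtain ⟨x₂, hx₂, hfx₂⟩ := intermediate_value_Ioo' hcd hcont.continuousOn ⟨hd, hc⟩
  exact ⟨x₁, x₂, hx₁, hx₂, hfx₁, hfx₂, fun x hfx =>
    hf.eq_or_eq_of_eq_zero trivial trivial trivial (hx₁.2.trans hx₂.1) hfx₁ hfx₂ hfx⟩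

end StrictConcaveRoots

lemma exists_isMinOn_Ioi_of_tendsto {g : ℝ → ℝ} (hg : ContinuousOn g (Ioi 0))
    (h0 : Tendsto g (𝓝[>] 0) atTop) (htop : Tendsto g atTop atTop) :
    ∃ x₀ ∈ Ioi (0 : ℝ), IsMinOn g (Ioi 0) x₀ := by
  -- reparametrise `(0, ∞)` by `exp` so that the extreme value theorem on `ℝ` applies
  have hcont : Continuous (g ∘ Real.exp) :=
    hg.comp_continuous Real.continuous_exp Real.exp_pos
  have hcoercive : Tendsto (g ∘ Real.exp) (cocompact ℝ) atTop := by
    rw [cocompact_eq_atBot_atTop, tendsto_sup]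
    exact ⟨h0.comp Real.tendsto_exp_atBot_nhdsGT, htop.comp Real.tendsto_exp_atTop⟩
  obtain ⟨t, ht⟩ := hcont.exists_forall_le hcoercive
  refine ⟨Real.exp t, Real.exp_pos t, fun x (hx : 0 < x) => ?_⟩
  simpa [Real.exp_log hx] using ht (Real.log x)

lemma tendsto_neg_div_nhdsGT_zero {k : ℝ → ℝ} (hk : ContinuousAt k 0) (h0 : k 0 < 0) :
    Tendsto (fun l => -k l / l) (𝓝[>] 0) atTop := by
  have hnum : Tendsto (fun l => -k l) (𝓝[>] 0) (𝓝 (-k 0)) :=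
    hk.neg.tendsto.mono_left nhdsWithin_le_nhds
  simpa only [div_eq_mul_inv] using
    hnum.pos_mul_atTop (neg_pos.2 h0) tendsto_inv_nhdsGT_zero

lemma exists_add_mul_neg_of_tendsto_div {k : ℝ → ℝ} (hk : Tendsto (fun l => k l / l) atTop atBot)
    (c x : ℝ) : ∃ R, x ≤ R ∧ k R + R * c < 0 := by
  obtain ⟨R, hR, hRx, hR1⟩ := ((hk.eventually (eventually_lt_atBot (-c))).and
    ((eventually_ge_atTop x).and (eventually_ge_atTop 1))).exists
  refine ⟨R, hRx, ?_⟩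
  rw [div_lt_iff₀ (by linarith)] at hR
  linarith

section RootCriterion

variable {y l c : ℝ}

lemma add_mul_eq_zero_iff_neg_div_eq (hl : 0 < l) : y + l * c = 0 ↔ -y / l = c := by
  rw [div_eq_iff hl.ne']
  constructor <;> intro <;> linarith

lemma add_mul_nonpos_iff_le_neg_div (hl : 0 < l) : y + l * c ≤ 0 ↔ c ≤ -y / l := by
  rw [le_div_iff₀ hl]
  constructor <;> intro <;> linarith

end RootCriterion

/-- root structure of `k λ + λ c = 0` for a strictly concave `k` with
`k 0 < 0` and superlinear decay, where `c* = inf_{λ>0} (-k λ / λ)`. -/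
theorem stmt2
    (k : ℝ → ℝ) (hcont : Continuous k) (hconc : StrictConcaveOn ℝ Set.univ k)
    (h0 : k 0 < 0)
    (hsuper : Tendsto (fun l => k l / l) atTop atBot)
    (cstar : ℝ) (hcstar : cstar = sInf {y | ∃ l : ℝ, 0 < l ∧ y = -k l / l}) :
    (∃! l : ℝ, 0 < l ∧ k l + l * cstar = 0) ∧
    (∀ c : ℝ, cstar < c →
      ∃ l₁ l₂ : ℝ, 0 < l₁ ∧ l₁ < l₂ ∧
        k l₁ + l₁ * c = 0 ∧ k l₂ + l₂ * c = 0 ∧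
        ∀ l : ℝ, 0 < l → k l + l * c = 0 → l = l₁ ∨ l = l₂) ∧
    (∀ c : ℝ, c < cstar → ¬ ∃ l : ℝ, 0 < l ∧ k l + l * c = 0) := by
  obtain ⟨l₀, hl₀ : 0 < l₀, hmin⟩ := exists_isMinOn_Ioi_of_tendsto (g := fun l => -k l / l)
    (hcont.neg.continuousOn.div continuousOn_id fun l (hl : 0 < l) => hl.ne')
    (tendsto_neg_div_nhdsGT_zero hcont.continuousAt h0)
    ((tendsto_neg_atBot_atTop.comp hsuper).congr fun l => (neg_div l (k l)).symm)
  have hcs : cstar = -k l₀ / l₀ :=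
    hcstar ▸ IsLeast.csInf_eq ⟨⟨l₀, hl₀, rfl⟩, by rintro _ ⟨l, hl, rfl⟩; exact hmin hl⟩
  have hconc_c (c : ℝ) : StrictConcaveOn ℝ univ fun l => k l + l * c :=
    hconc.add_concaveOn ((LinearMap.mulRight ℝ c).concaveOn convex_univ)
  have hroot₀ : k l₀ + l₀ * cstar = 0 := (add_mul_eq_zero_iff_neg_div_eq hl₀).2 hcs.symm
  refine ⟨⟨l₀, ⟨hl₀, hroot₀⟩, fun l ⟨hl, hroot⟩ => ?_⟩, fun c hc => ?_, ?_⟩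
  · have hmax {m : ℝ} (hm : k m + m * cstar = 0) :
        IsMaxOn (fun l => k l + l * cstar) (Ioi 0) m := fun x (hx : 0 < x) => by
      show k x + x * cstar ≤ k m + m * cstar
      rw [hm]
      exact (add_mul_nonpos_iff_le_neg_div hx).2 (hcs ▸ hmin hx)
    exact ((hconc_c cstar).subset (subset_univ _) (convex_Ioi 0)).eq_of_isMaxOn
      (hmax hroot) (hmax hroot₀) hl hl₀
  · obtain ⟨R, hl₀R, hR⟩ := exists_add_mul_neg_of_tendsto_div hsuper c l₀
    have hpos : 0 < k l₀ + l₀ * c := by linarith [mul_lt_mul_of_pos_left hc hl₀]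
    obtain ⟨l₁, l₂, hl₁, hl₂, hz₁, hz₂, honly⟩ := (hconc_c c).exists_two_zeros
      (hcont.add (continuous_mul_const c)) hl₀.le hl₀R (by simpa using h0) hpos hR
    exact ⟨l₁, l₂, hl₁.1, hl₁.2.trans hl₂.1, hz₁, hz₂, fun l _ hl => honly l hl⟩
  · rintro c hc ⟨l, hl, hroot⟩
    have hle : -k l₀ / l₀ ≤ -k l / l := hmin hl
    linarith [(add_mul_eq_zero_iff_neg_div_eq hl).1 hroot]
end

section
/- Let k : ℝ → ℝ be strictly concave and continuous with k(0) < 0 and superlinear decay at +∞. For c > c* := inf_{λ>0}(-k(λ)/λ) and ε ≥ 0 small, let λ_ε(c) ≤ Λ_ε(c) denote the two positive roots of k(λ) + λc - ελ² = 0 (they exist for ε small enough). If ε_n → ε ≥ 0 with c > c*_{ε_n} for all n, then λ_{ε_n}(c) → λ_ε(c) and Λ_{ε_n}(c) → Λ_ε(c). -/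
open Set Filter

/-- If `F < 0` on `[0, p)`, the sequence is nonnegative and `F (x n) → 0`, then
eventually `x n > a` for any `a < p`. -/
lemma aux_lower (F : ℝ → ℝ) (hF : Continuous F) (p : ℝ)
    (hneg : ∀ y, 0 ≤ y → y < p → F y < 0) (x : ℕ → ℝ) (hx0 : ∀ n, 0 ≤ x n)
    (hFx : Tendsto (fun n => F (x n)) atTop (nhds 0)) :
    ∀ a, a < p → ∀ᶠ n in atTop, a < x n := by
  intro a ha
  rcases lt_or_ge a 0 with h | h
  · exact Eventually.of_forall fun n => lt_of_lt_of_le h (hx0 n)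
  · obtain ⟨x₀, hx₀, hmax⟩ :=
      isCompact_Icc.exists_isMaxOn ⟨0, Set.mem_Icc.mpr ⟨le_refl 0, h⟩⟩ hF.continuousOn
    have hFx₀ : F x₀ < 0 := hneg x₀ hx₀.1 (lt_of_le_of_lt hx₀.2 ha)
    filter_upwards [hFx (Ioi_mem_nhds hFx₀)] with n hn
    by_contra hcon
    push_neg at hcon
    have hle : F (x n) ≤ F x₀ := hmax (Set.mem_Icc.mpr ⟨hx0 n, hcon⟩)
    have hgt : F x₀ < F (x n) := hn
    linarith

/-- If `F < 0` on `(p, B]`, the sequence is eventually `≤ B` and `F (x n) → 0`, then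
eventually `x n < b` for any `b > p`. -/
lemma aux_upper (F : ℝ → ℝ) (hF : Continuous F) (p B : ℝ)
    (hneg : ∀ y, p < y → y ≤ B → F y < 0) (x : ℕ → ℝ)
    (hxB : ∀ᶠ n in atTop, x n ≤ B)
    (hFx : Tendsto (fun n => F (x n)) atTop (nhds 0)) :
    ∀ b, p < b → ∀ᶠ n in atTop, x n < b := by
  intro b hb
  rcases lt_or_ge B b with h | h
  · filter_upwards [hxB] with n hn; exact lt_of_le_of_lt hn h
  · obtain ⟨x₀, hx₀, hmax⟩ :=
      isCompact_Icc.exists_isMaxOn ⟨b, Set.mem_Icc.mpr ⟨le_refl b, h⟩⟩ hF.continuousOn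
    have hFx₀ : F x₀ < 0 := hneg x₀ (lt_of_lt_of_le hb hx₀.1) hx₀.2
    filter_upwards [hxB, hFx (Ioi_mem_nhds hFx₀)] with n h1 h2
    by_contra hcon
    push_neg at hcon
    have hle : F (x n) ≤ F x₀ := hmax (Set.mem_Icc.mpr ⟨hcon, h1⟩)
    have hgt : F x₀ < F (x n) := h2
    linarith

/-- continuity in `ε` of the two positive roots `λ_ε(c) ≤ Λ_ε(c)` of
`k(λ) + λc - ελ² = 0` as the regularization `ε_n → ε ≥ 0` is removed, where
`c > c*_{ε_n} := inf_{λ>0} (-k λ + ε_n λ²)/λ` for all `n`. -/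
theorem stmt3
    (k : ℝ → ℝ) (hcont : Continuous k) (hconc : StrictConcaveOn ℝ Set.univ k)
    (h0 : k 0 < 0)
    (hsuper : Tendsto (fun l => k l / l) atTop atBot)
    (c : ℝ)
    (lam Lam : ℝ → ℝ)  -- the roots, as functions of the viscosity parameter ε
    (ε : ℝ) (hε : 0 ≤ ε) (εs : ℕ → ℝ) (hεs : ∀ n, 0 ≤ εs n)
    (hεlim : Tendsto εs atTop (nhds ε))
    (hc : ∀ n, sInf {y | ∃ l : ℝ, 0 < l ∧ y = (-k l + εs n * l ^ 2) / l} < c)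
    (hroots : ∀ ε' : ℝ, (ε' = ε ∨ ∃ n, ε' = εs n) →
      0 < lam ε' ∧ lam ε' ≤ Lam ε' ∧
      k (lam ε') + lam ε' * c - ε' * lam ε' ^ 2 = 0 ∧
      k (Lam ε') + Lam ε' * c - ε' * Lam ε' ^ 2 = 0 ∧
      ∀ l : ℝ, 0 < l → k l + l * c - ε' * l ^ 2 = 0 → l = lam ε' ∨ l = Lam ε') :
    Tendsto (fun n => lam (εs n)) atTop (nhds (lam ε)) ∧
    Tendsto (fun n => Lam (εs n)) atTop (nhds (Lam ε)) := by
  have hfamε : ε = ε ∨ ∃ n, ε = εs n := Or.inl rfl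
  have hnn : ∀ ε', (ε' = ε ∨ ∃ n, ε' = εs n) → 0 ≤ ε' := by
    rintro ε' (rfl | ⟨n, rfl⟩)
    · exact hε
    · exact hεs n
  obtain ⟨hl0ε, hlLε, heq1ε, heq2ε, huniqε⟩ := hroots ε hfamε
  -- a uniform upper bound `M` on all positive roots
  obtain ⟨M₀, hM₀⟩ : ∃ M₀, ∀ l ≥ M₀, k l / l < -c := by
    have := hsuper.eventually (eventually_lt_atBot (-c))
    rwa [eventually_atTop] at this
  set M : ℝ := max M₀ (max (Lam ε + 1) 1) with hMdef
  have hM1 : (1:ℝ) ≤ M := le_trans (le_max_right _ _) (le_max_right _ _)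
  have hMΛ : Lam ε < M :=
    lt_of_lt_of_le (lt_add_one _) (le_trans (le_max_left _ _) (le_max_right _ _))
  have hMneg : ∀ e, 0 ≤ e → ∀ l, M ≤ l → k l + l * c - e * l ^ 2 < 0 := by
    intro e he l hl
    have hl0 : 0 < l := lt_of_lt_of_le (by linarith) hl
    have h1 : k l / l < -c := hM₀ l (le_trans (le_max_left _ _) hl)
    have h2 : k l < -c * l := by rwa [div_lt_iff₀ hl0] at h1
    nlinarith [mul_nonneg he (sq_nonneg l)]
  have hrootM : ∀ e, 0 ≤ e → ∀ l, 0 < l → k l + l * c - e * l ^ 2 = 0 → l < M := by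
    intro e he l hl heq
    by_contra hcon
    push_neg at hcon
    exact absurd heq (ne_of_lt (hMneg e he l hcon))
  have hFc : ∀ e : ℝ, Continuous (fun l => k l + l * c - e * l ^ 2) := fun e =>
    (hcont.add (continuous_id.mul continuous_const)).sub
      (continuous_const.mul (continuous_pow 2))
  -- Lemma A : any point where the concave function is positive lies strictly between the roots
  have hA : ∀ ε', (ε' = ε ∨ ∃ n, ε' = εs n) → ∀ x, 0 < x →
      0 < k x + x * c - ε' * x ^ 2 → lam ε' < x ∧ x < Lam ε' := by
    intro ε' hmem x hx hpos
    obtain ⟨hl0, hlL, _heq1, _heq2, huniq⟩ := hroots ε' hmem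
    have he' := hnn ε' hmem
    have hg0 : k 0 + 0 * c - ε' * 0 ^ 2 < 0 := by simpa using h0
    constructor
    · have h0x : (0:ℝ) ∈ Ioo (k 0 + 0 * c - ε' * 0 ^ 2) (k x + x * c - ε' * x ^ 2) :=
        ⟨hg0, hpos⟩
      obtain ⟨r, hr, hgr⟩ := intermediate_value_Ioo hx.le (hFc ε').continuousOn h0x
      rcases huniq r hr.1 hgr with h | h
      · exact h ▸ hr.2
      · exact lt_of_le_of_lt hlL (h ▸ hr.2)
    · set M' := max M (x + 1) with hM'
      have hxM' : x < M' := lt_of_lt_of_le (lt_add_one x) (le_max_right _ _)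
      have hgM' : k M' + M' * c - ε' * M' ^ 2 < 0 := hMneg ε' he' M' (le_max_left _ _)
      have h0x : (0:ℝ) ∈ Ioo (k M' + M' * c - ε' * M' ^ 2) (k x + x * c - ε' * x ^ 2) :=
        ⟨hgM', hpos⟩
      obtain ⟨r, hr, hgr⟩ := intermediate_value_Ioo' hxM'.le (hFc ε').continuousOn h0x
      have hr0 : 0 < r := lt_trans hx hr.1
      rcases huniq r hr0 hgr with h | h
      · exact lt_of_lt_of_le (h ▸ hr.1) hlL
      · exact h ▸ hr.1
  -- the sequences of roots and their bounds
  have hmemn : ∀ n : ℕ, εs n = ε ∨ ∃ m, εs n = εs m := fun n => Or.inr ⟨n, rfl⟩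
  have hlamn_pos : ∀ n, 0 < lam (εs n) := fun n => (hroots _ (hmemn n)).1
  have hLamn_pos : ∀ n, 0 < Lam (εs n) :=
    fun n => lt_of_lt_of_le (hlamn_pos n) (hroots _ (hmemn n)).2.1
  have hlamn_M : ∀ n, lam (εs n) < M := fun n =>
    hrootM (εs n) (hεs n) _ (hlamn_pos n) (hroots _ (hmemn n)).2.2.1
  have hLamn_M : ∀ n, Lam (εs n) < M := fun n =>
    hrootM (εs n) (hεs n) _ (hLamn_pos n) (hroots _ (hmemn n)).2.2.2.1
  -- the limiting function
  set F : ℝ → ℝ := fun y => k y + y * c - ε * y ^ 2 with hFdef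
  have hFcont : Continuous F := hFc ε
  have htend0 : Tendsto (fun n => |εs n - ε| * M ^ 2) atTop (nhds 0) := by
    have h1 : Tendsto (fun n => |εs n - ε|) atTop (nhds |ε - ε|) :=
      (hεlim.sub tendsto_const_nhds).abs
    have h2 := h1.mul_const (M ^ 2)
    simpa using h2
  have hFseq : ∀ (x : ℕ → ℝ), (∀ n, 0 < x n) → (∀ n, x n < M) →
      (∀ n, k (x n) + (x n) * c - εs n * (x n) ^ 2 = 0) →
      Tendsto (fun n => F (x n)) atTop (nhds 0) := by
    intro x hx0 hxM hxeq
    apply squeeze_zero_norm _ htend0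
    intro n
    have h1 : F (x n) = (εs n - ε) * (x n) ^ 2 := by
      have := hxeq n
      simp only [hFdef]
      linarith
    rw [h1, Real.norm_eq_abs, abs_mul, abs_of_nonneg (sq_nonneg (x n))]
    exact mul_le_mul_of_nonneg_left (by nlinarith [hx0 n, hxM n]) (abs_nonneg _)
  have hFlam0 : Tendsto (fun n => F (lam (εs n))) atTop (nhds 0) :=
    hFseq (fun n => lam (εs n)) hlamn_pos hlamn_M (fun n => (hroots _ (hmemn n)).2.2.1)
  have hFLam0 : Tendsto (fun n => F (Lam (εs n))) atTop (nhds 0) :=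
    hFseq (fun n => Lam (εs n)) hLamn_pos hLamn_M (fun n => (hroots _ (hmemn n)).2.2.2.1)
  -- `F < 0` to the left of the small root
  have hneg_low : ∀ y, 0 ≤ y → y < lam ε → F y < 0 := by
    intro y hy hylt
    rcases eq_or_lt_of_le hy with h | hy0
    · simp only [hFdef, ← h]
      simpa using h0
    · rcases lt_trichotomy (F y) 0 with h | h | h
      · exact h
      · rcases huniqε y hy0 (by simpa [hFdef] using h) with h' | h'
        · exact absurd h' (ne_of_lt hylt)
        · rw [h'] at hylt
          exact absurd hylt (not_lt.mpr hlLε)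
      · exact absurd (hA ε hfamε y hy0 (by simpa [hFdef] using h)).1 (by linarith)
  rcases eq_or_lt_of_le hlLε with hEq | hLt
  · -- double root case
    have hneg_up : ∀ y, lam ε < y → y ≤ M → F y < 0 := by
      intro y hy hyM
      have hy0 : 0 < y := lt_trans hl0ε hy
      rcases lt_trichotomy (F y) 0 with h | h | h
      · exact h
      · rcases huniqε y hy0 (by simpa [hFdef] using h) with h' | h'
        · exact absurd h'.symm (ne_of_lt hy)
        · rw [h', ← hEq] at hy
          exact absurd hy (lt_irrefl _)
      · have h2 := (hA ε hfamε y hy0 (by simpa [hFdef] using h)).2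
        rw [← hEq] at h2
        exact absurd h2 (not_lt.mpr hy.le)
    constructor
    · exact tendsto_order.2
        ⟨fun a ha => aux_lower F hFcont (lam ε) hneg_low _ (fun n => (hlamn_pos n).le)
          hFlam0 a ha,
         fun b hb => aux_upper F hFcont (lam ε) M hneg_up _
          (Eventually.of_forall fun n => (hlamn_M n).le) hFlam0 b hb⟩
    · rw [← hEq]
      exact tendsto_order.2
        ⟨fun a ha => aux_lower F hFcont (lam ε) hneg_low _ (fun n => (hLamn_pos n).le)
          hFLam0 a ha,
         fun b hb => aux_upper F hFcont (lam ε) M hneg_up _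
          (Eventually.of_forall fun n => (hLamn_M n).le) hFLam0 b hb⟩
  · -- two distinct roots: the function is positive strictly between them
    have h_btw : ∀ x, lam ε < x → x < Lam ε → 0 < k x + x * c - ε * x ^ 2 := by
      intro x h1 h2
      have hd : 0 < Lam ε - lam ε := by linarith
      set t := (Lam ε - x) / (Lam ε - lam ε) with htdef
      have ht : 0 < t := div_pos (by linarith) hd
      have ht1 : t < 1 := by rw [htdef, div_lt_one hd]; linarith
      have hx' : x = t * lam ε + (1 - t) * Lam ε := by
        rw [htdef]
        field_simp
        ring
      have key := hconc.2 (Set.mem_univ (lam ε)) (Set.mem_univ (Lam ε))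
        (ne_of_lt hLt) ht (by linarith : (0:ℝ) < 1 - t) (by ring)
      simp only [smul_eq_mul] at key
      have h1' : t * (k (lam ε) + lam ε * c - ε * lam ε ^ 2) = 0 := by rw [heq1ε]; ring
      have h2' : (1 - t) * (k (Lam ε) + Lam ε * c - ε * Lam ε ^ 2) = 0 := by
        rw [heq2ε]; ring
      have hint : 0 ≤ ε * (t * (1 - t) * (lam ε - Lam ε) ^ 2) :=
        mul_nonneg hε (mul_nonneg (mul_nonneg ht.le (by linarith)) (sq_nonneg _))
      rw [hx']
      nlinarith [key, h1', h2', hint]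
    -- upper control of `lam` via moving test points
    have hlam_up : ∀ b, lam ε < b → ∀ᶠ n in atTop, lam (εs n) < b := by
      intro b hb
      set b' := lam ε + min (b - lam ε) (Lam ε - lam ε) / 2 with hb'
      have hmin : 0 < min (b - lam ε) (Lam ε - lam ε) := lt_min (by linarith) (by linarith)
      have h1 : lam ε < b' := by rw [hb']; linarith
      have h2 : b' < Lam ε := by
        have := min_le_right (b - lam ε) (Lam ε - lam ε)
        rw [hb']; linarith
      have h3 : b' < b := by
        have := min_le_left (b - lam ε) (Lam ε - lam ε)
        rw [hb']; linarith
      have hFb : 0 < k b' + b' * c - ε * b' ^ 2 := h_btw b' h1 h2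
      have htb : Tendsto (fun n => k b' + b' * c - εs n * b' ^ 2) atTop
          (nhds (k b' + b' * c - ε * b' ^ 2)) :=
        tendsto_const_nhds.sub (hεlim.mul_const _)
      filter_upwards [htb (Ioi_mem_nhds hFb)] with n hn
      have := (hA (εs n) (hmemn n) b' (by linarith) hn).1
      linarith
    -- lower control of `Lam` via moving test points
    have hLam_low : ∀ a, a < Lam ε → ∀ᶠ n in atTop, a < Lam (εs n) := by
      intro a ha
      set b' := Lam ε - min (Lam ε - a) (Lam ε - lam ε) / 2 with hb'
      have hmin : 0 < min (Lam ε - a) (Lam ε - lam ε) := lt_min (by linarith) (by linarith)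
      have h1 : lam ε < b' := by
        have := min_le_right (Lam ε - a) (Lam ε - lam ε)
        rw [hb']; linarith
      have h2 : b' < Lam ε := by rw [hb']; linarith
      have h3 : a < b' := by
        have := min_le_left (Lam ε - a) (Lam ε - lam ε)
        rw [hb']; linarith
      have hFb : 0 < k b' + b' * c - ε * b' ^ 2 := h_btw b' h1 h2
      have htb : Tendsto (fun n => k b' + b' * c - εs n * b' ^ 2) atTop
          (nhds (k b' + b' * c - ε * b' ^ 2)) :=
        tendsto_const_nhds.sub (hεlim.mul_const _)
      filter_upwards [htb (Ioi_mem_nhds hFb)] with n hn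
      have := (hA (εs n) (hmemn n) b' (by linarith) hn).2
      linarith
    -- `F < 0` to the right of the big root
    have hneg_upM : ∀ y, Lam ε < y → y ≤ M → F y < 0 := by
      intro y hy hyM
      have hy0 : 0 < y := lt_trans hl0ε (lt_of_le_of_lt hlLε hy)
      rcases lt_trichotomy (F y) 0 with h | h | h
      · exact h
      · rcases huniqε y hy0 (by simpa [hFdef] using h) with h' | h'
        · rw [h'] at hy
          exact absurd hy (not_lt.mpr hlLε)
        · exact absurd h'.symm (ne_of_lt hy)
      · exact absurd (hA ε hfamε y hy0 (by simpa [hFdef] using h)).2 (by linarith)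
    constructor
    · exact tendsto_order.2
        ⟨fun a ha => aux_lower F hFcont (lam ε) hneg_low _ (fun n => (hlamn_pos n).le)
          hFlam0 a ha, hlam_up⟩
    · exact tendsto_order.2
        ⟨hLam_low,
         fun b hb => aux_upper F hFcont (Lam ε) M hneg_upM _
          (Eventually.of_forall fun n => (hLamn_M n).le) hFLam0 b hb⟩
end
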